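/- arXiv:1706.09738 — 3 statements merged into one kernel-verified Lean document; each statement's English description precedes it below -/
import Mathlib

section
/- Let p be a prime and let P(z) = z^{p+1} + a_1 z^p + a_2 z^{p-1} + ... + a_{p-1} z^2 be a polynomial with coefficients in a valuation ring O with maximal ideal I, and let c, r be elements of O. Suppose that every coefficient of the polynomial ((p+1)z^p + p a_1 z^{p-1} + (p-1) a_2 z^{p-2} + ... + 2 a_{p-1} z)(z - c) - (z^{p+1} + a_1 z^p + ... + a_{p-1} z^2) lies in I, and that p ∈ I. Then c ∈ O (is integral) and a_2, a_3, ..., a_{p-1} all lie in I. -/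
/-!
Comparing the coefficients of `z^{p+1-k}` in `P'(z)(z - c) - P(z)` gives, modulo `I`,
`(p - k) a_k ≡ (p + 2 - k) c a_{k-1}` for `2 ≤ k ≤ p - 1`. Since `p ∈ I`, the integers `p - k` are
units of the valuation ring, so `a_k ∈ I` follows from `a_{k-1} ∈ I`; the induction starts at
`k = 2`, where the right-hand side is `p c a_1 ∈ I`.
-/

open Polynomial

namespace AddValuation

variable {R Γ₀ : Type*} [Ring R] [LinearOrderedAddCommMonoidWithTop Γ₀] (v : AddValuation R Γ₀)

theorem natCast_nonneg (n : ℕ) : 0 ≤ v (n : R) := by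
  induction n with
  | zero => simp
  | succ n ih => exact_mod_cast v.map_le_add ih v.map_one.ge

theorem intCast_nonneg (n : ℤ) : 0 ≤ v (n : R) := by
  rcases n.eq_nat_or_neg with ⟨m, rfl | rfl⟩
  · exact_mod_cast v.natCast_nonneg m
  · rw [Int.cast_neg, v.map_neg]; exact_mod_cast v.natCast_nonneg m

theorem mul_pos_of_pos_of_nonneg {x y : R} (hx : 0 < v x) (hy : 0 ≤ v y) : 0 < v (x * y) := by
  rw [v.map_mul]; exact hx.trans_le (le_add_of_nonneg_right hy)

theorem mul_pos_of_nonneg_of_pos {x y : R} (hx : 0 ≤ v x) (hy : 0 < v y) : 0 < v (x * y) := by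
  rw [v.map_mul]; exact hy.trans_le (le_add_of_nonneg_left hx)

theorem pos_of_sub_pos {x y : R} (hxy : 0 < v (x - y)) (hy : 0 < v y) : 0 < v x := by
  simpa using v.map_lt_add hxy hy

variable {p : ℕ} (hp : p.Prime) (hpv : 0 < v (p : R))
include hp hpv

-- Otherwise a Bézout relation `1 = p A + m B` would give `v 1 > 0`.
theorem natCast_eq_zero_of_not_dvd {m : ℕ} (hm : ¬ p ∣ m) : v (m : R) = 0 := by
  refine le_antisymm (not_lt.mp fun hmv => ?_) (v.natCast_nonneg m)
  have hbezout : ((Nat.gcd p m : ℕ) : R) = p * (Nat.gcdA p m : R) + m * (Nat.gcdB p m : R) := by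
    exact_mod_cast congrArg (Int.cast : ℤ → R) (Nat.gcd_eq_gcd_ab p m)
  rw [(Nat.coprime_comm.mp ((Nat.Prime.coprime_iff_not_dvd hp).mpr hm)).symm.gcd_eq_one,
    Nat.cast_one] at hbezout
  have := v.map_lt_add (v.mul_pos_of_pos_of_nonneg hpv (v.intCast_nonneg (Nat.gcdA p m)))
    (v.mul_pos_of_pos_of_nonneg hmv (v.intCast_nonneg (Nat.gcdB p m)))
  simp [← hbezout] at this

theorem pos_of_natCast_mul_pos {m : ℕ} (hm : ¬ p ∣ m) {x : R} (hx : 0 < v (m * x)) : 0 < v x := by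
  rwa [v.map_mul, v.natCast_eq_zero_of_not_dvd hp hpv hm, zero_add] at hx

end AddValuation

namespace Polynomial

variable {R : Type*} [CommRing R]

theorem coeff_sum_C_mul_X_pow_sub (a : ℕ → R) {N k : ℕ} {s : Finset ℕ} (hk : k ∈ s)
    (hs : ∀ j ∈ s, j ≤ N) : (∑ j ∈ s, C (a j) * X ^ (N - j)).coeff (N - k) = a k := by
  rw [finsetSum_coeff, Finset.sum_eq_single k]
  · simp
  · intro j hj hjk
    rw [coeff_C_mul_X_pow, if_neg (by have := hs j hj; have := hs k hk; omega)]
  · exact fun h => absurd hk h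

theorem coeff_derivative_mul_X_sub_C_sub (P : R[X]) (c : R) (n : ℕ) :
    (derivative P * (X - C c) - P).coeff (n + 1)
      = n * P.coeff (n + 1) - (n + 2 : ℕ) * c * P.coeff (n + 2) := by
  rw [mul_sub, coeff_sub, coeff_sub, coeff_mul_X, coeff_mul_C, coeff_derivative, coeff_derivative]
  push_cast
  ring

end Polynomial

theorem pos_of_recurrence {R Γ₀ : Type*} [Ring R] [LinearOrderedAddCommMonoidWithTop Γ₀]
    (v : AddValuation R Γ₀) {p : ℕ} (hp : p.Prime) (hpv : 0 < v (p : R)) {a : ℕ → R} {c : R}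
    (hc : 0 ≤ v c) (ha₁ : 0 ≤ v (a 1))
    (hrec : ∀ k, 2 ≤ k → k ≤ p - 1 →
      0 < v ((p - k : ℕ) * a k - (p + 2 - k : ℕ) * c * a (k - 1))) :
    ∀ k, 2 ≤ k → k ≤ p - 1 → 0 < v (a k) := by
  have hunit : ∀ k, 2 ≤ k → k ≤ p - 1 → ¬ p ∣ p - k := fun k hk hkp =>
    Nat.not_dvd_of_pos_of_lt (by omega) (by omega)
  intro k hk
  induction k, hk using Nat.le_induction with
  | base =>
    intro h2
    refine v.pos_of_natCast_mul_pos hp hpv (hunit 2 le_rfl h2)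
      (v.pos_of_sub_pos (hrec 2 le_rfl h2) ?_)
    rw [Nat.add_sub_cancel, mul_assoc]
    exact v.mul_pos_of_pos_of_nonneg hpv (by rw [v.map_mul]; exact add_nonneg hc ha₁)
  | succ k hk ih =>
    intro hk1
    have hterm : 0 < v ((p + 2 - (k + 1) : ℕ) * c * a k) :=
      v.mul_pos_of_nonneg_of_pos (by rw [v.map_mul]; exact add_nonneg (v.natCast_nonneg _) hc)
        (ih (by omega))
    exact v.pos_of_natCast_mul_pos hp hpv (hunit (k + 1) (by omega) hk1)
      (v.pos_of_sub_pos (hrec (k + 1) (by omega) hk1) hterm)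

theorem stmt0_general {K : Type*} [Field K] (v : AddValuation K (WithTop ℝ))
    (p : ℕ) (hp : p.Prime)
    (a : ℕ → K) (c : K)
    (ha : ∀ j, 1 ≤ j → j ≤ p - 1 → 0 ≤ v (a j))
    (hc : 0 ≤ v c)
    (P : Polynomial K)
    (hP : P = X ^ (p + 1) + ∑ j ∈ Finset.Icc 1 (p - 1), C (a j) * X ^ (p + 1 - j))
    (hQ : ∀ i : ℕ, 0 < v ((derivative P * (X - C c) - P).coeff i))
    (hpI : 0 < v ((p : K))) :
    0 ≤ v c ∧ ∀ j, 2 ≤ j → j ≤ p - 1 → 0 < v (a j) := by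
  have hcoeff : ∀ k, 1 ≤ k → k ≤ p - 1 → P.coeff (p + 1 - k) = a k := fun k hk₁ hk₂ => by
    rw [hP, coeff_add, coeff_X_pow, if_neg (by omega), zero_add,
      coeff_sum_C_mul_X_pow_sub a (Finset.mem_Icc.mpr ⟨hk₁, hk₂⟩) fun j hj => by
        have := Finset.mem_Icc.mp hj; omega]
  refine ⟨hc, pos_of_recurrence v hp hpI hc (ha 1 le_rfl (by have := hp.two_le; omega)) ?_⟩
  intro k hk₂ hkp
  have := hQ (p - k + 1)
  rwa [coeff_derivative_mul_X_sub_C_sub, show p - k + 1 = p + 1 - k by omega,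
    show p - k + 2 = p + 1 - (k - 1) by omega, hcoeff k (by omega) hkp,
    hcoeff (k - 1) (by omega) (by omega), show p + 1 - (k - 1) = p + 2 - k by omega] at this

/-- Let `p` be prime and
`P(z) = z^{p+1} + a₁ z^p + … + a_{p-1} z²` with coefficients in the valuation
ring `O = {x | 0 ≤ v x}` of a valued field `(K, v)`, and `c, r ∈ O`.  If every
coefficient of `P'(z)·(z - c) - P(z)` lies in the maximal ideal
`I = {x | 0 < v x}` and `p ∈ I`, then `c ∈ O` and `a₂, …, a_{p-1} ∈ I`. -/
theorem stmt0 {K : Type*} [Field K] (v : AddValuation K (WithTop ℝ))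
    (p : ℕ) (hp : p.Prime)
    (a : ℕ → K) (c r : K)
    (ha : ∀ j, 1 ≤ j → j ≤ p - 1 → 0 ≤ v (a j))
    (hc : 0 ≤ v c) (hr : 0 ≤ v r)
    (P : Polynomial K)
    (hP : P = X ^ (p + 1) + ∑ j ∈ Finset.Icc 1 (p - 1), C (a j) * X ^ (p + 1 - j))
    (hQ : ∀ i : ℕ, 0 < v ((derivative P * (X - C c) - P).coeff i))
    (hpI : 0 < v ((p : K))) :
    0 ≤ v c ∧ ∀ j, 2 ≤ j → j ≤ p - 1 → 0 < v (a j) :=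
  stmt0_general v p hp a c ha hc P hP hQ hpI
end

section
/- For the passport a_1^2 a_4 b_1^2 b_2^2 there are exactly two plane bipartite trees, one with automorphism group of order 2 and one with trivial automorphism group, and 1 + 1/2 = 2!·3!/(2!·2!·2!). -/
open Equiv Finset

attribute [local instance] Classical.propDecidable

noncomputable section

/-- Number of cycles (orbits, including fixed points) of a permutation of
`Fin E`. -/
def numCycles {E : ℕ} (g : Equiv.Perm (Fin E)) : ℕ :=
  E - g.cycleType.sum + Multiset.card g.cycleType

/-- Number of cycles of length `d` of a permutation of `Fin E` (for `d = 1`,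
the number of fixed points). -/
def cycleCount {E : ℕ} (g : Equiv.Perm (Fin E)) (d : ℕ) : ℕ :=
  if d = 1 then E - g.cycleType.sum else Multiset.count d g.cycleType

/-- A plane bipartite tree with `E` edges, encoded by the pair of rotation
permutations of the edges around white (`s.1`) and black (`s.2`) vertices:
the action is transitive (connectivity), the number of vertices is `E + 1`
and there is exactly one face. -/
def IsPlaneBipTree {E : ℕ} (s : Equiv.Perm (Fin E) × Equiv.Perm (Fin E)) : Prop :=
  (∀ i j : Fin E, ∃ g ∈ Subgroup.closure ({s.1, s.2} : Set (Equiv.Perm (Fin E))), g i = j) ∧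
  numCycles s.1 + numCycles s.2 = E + 1 ∧
  numCycles (s.1 * s.2) = 1

/-- A `2¹`-map with `E` edges: a connected bipartite plane map with two faces,
the bounded one of perimeter 2 (a fixed point of the face permutation
`s.1 * s.2`); Euler's formula forces `V = E`. -/
def IsTwoOneMap {E : ℕ} (s : Equiv.Perm (Fin E) × Equiv.Perm (Fin E)) : Prop :=
  (∀ i j : Fin E, ∃ g ∈ Subgroup.closure ({s.1, s.2} : Set (Equiv.Perm (Fin E))), g i = j) ∧
  numCycles s.1 + numCycles s.2 = E ∧
  numCycles (s.1 * s.2) = 2 ∧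
  (∃ i, (s.1 * s.2) i = i)

/-- Isomorphism of bipartite maps on the same edge set: simultaneous
conjugation of both rotations. -/
def conjRel {E : ℕ} (s t : Equiv.Perm (Fin E) × Equiv.Perm (Fin E)) : Prop :=
  ∃ g : Equiv.Perm (Fin E), g * s.1 * g⁻¹ = t.1 ∧ g * s.2 * g⁻¹ = t.2

theorem conjRel_equiv {E : ℕ} : Equivalence (conjRel (E := E)) := by
  constructor
  · exact fun s => ⟨1, by simp, by simp⟩
  · rintro s t ⟨g, h1, h2⟩
    exact ⟨g⁻¹, by rw [← h1]; group, by rw [← h2]; group⟩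
  · rintro s t u ⟨g, h1, h2⟩ ⟨g', h1', h2'⟩
    exact ⟨g' * g, by rw [← h1', ← h1]; group, by rw [← h2', ← h2]; group⟩

/-- The number of automorphisms of a bipartite map: permutations of the edges
commuting with both rotations. -/
def autCard {E : ℕ} (s : Equiv.Perm (Fin E) × Equiv.Perm (Fin E)) : ℕ :=
  Fintype.card {g : Equiv.Perm (Fin E) // g * s.1 = s.1 * g ∧ g * s.2 = s.2 * g}

theorem conj_commute_aux {G : Type*} [Group G] (g σ h' : G)
    (hc : h' * σ = σ * h') :
    (g * h' * g⁻¹) * (g * σ * g⁻¹) = (g * σ * g⁻¹) * (g * h' * g⁻¹) := by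
  calc (g * h' * g⁻¹) * (g * σ * g⁻¹) = g * (h' * σ) * g⁻¹ := by group
    _ = g * (σ * h') * g⁻¹ := by rw [hc]
    _ = (g * σ * g⁻¹) * (g * h' * g⁻¹) := by group

theorem autCard_conj {E : ℕ} (s t : Equiv.Perm (Fin E) × Equiv.Perm (Fin E))
    (h : conjRel s t) : autCard s = autCard t := by
  obtain ⟨g, h1, h2⟩ := h
  have hs1 : s.1 = g⁻¹ * t.1 * g⁻¹⁻¹ := by rw [← h1]; group
  have hs2 : s.2 = g⁻¹ * t.2 * g⁻¹⁻¹ := by rw [← h2]; group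
  refine Fintype.card_congr ⟨fun h' => ⟨g * h'.1 * g⁻¹, ?_, ?_⟩,
    fun h' => ⟨g⁻¹ * h'.1 * g, ?_, ?_⟩,
    fun h' => Subtype.ext (by dsimp; group),
    fun h' => Subtype.ext (by dsimp; group)⟩
  · rw [← h1]; exact conj_commute_aux g s.1 h'.1 h'.2.1
  · rw [← h2]; exact conj_commute_aux g s.2 h'.1 h'.2.2
  · rw [hs1]
    have := conj_commute_aux g⁻¹ t.1 h'.1 h'.2.1
    simpa [inv_inv] using this
  · rw [hs2]
    have := conj_commute_aux g⁻¹ t.2 h'.1 h'.2.2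
    simpa [inv_inv] using this

/-- The setoid of plane bipartite trees up to isomorphism. -/
def treeSetoid (E : ℕ) : Setoid {s : Equiv.Perm (Fin E) × Equiv.Perm (Fin E) // IsPlaneBipTree s} :=
  ⟨fun T T' => conjRel T.1 T'.1,
   ⟨fun _ => conjRel_equiv.refl _,
    fun h => conjRel_equiv.symm h,
    fun h h' => conjRel_equiv.trans h h'⟩⟩

/-- The setoid of `2¹`-maps up to isomorphism. -/
def mapSetoid (E : ℕ) : Setoid {s : Equiv.Perm (Fin E) × Equiv.Perm (Fin E) // IsTwoOneMap s} :=
  ⟨fun T T' => conjRel T.1 T'.1,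
   ⟨fun _ => conjRel_equiv.refl _,
    fun h => conjRel_equiv.symm h,
    fun h h' => conjRel_equiv.trans h h'⟩⟩

/-- The order of the automorphism group of an isomorphism class of plane
bipartite trees. -/
def autCardT {E : ℕ} : Quotient (treeSetoid E) → ℕ :=
  Quotient.lift (fun T => autCard T.1) (fun _ _ h => autCard_conj _ _ h)

theorem cycleCount_conj {E : ℕ} {s t : Equiv.Perm (Fin E) × Equiv.Perm (Fin E)}
    (h : conjRel s t) :
    (∀ d, cycleCount s.1 d = cycleCount t.1 d) ∧
    (∀ d, cycleCount s.2 d = cycleCount t.2 d) := by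
  obtain ⟨g, h1, h2⟩ := h
  constructor <;> intro d <;>
    simp [cycleCount, ← h1, ← h2, Equiv.Perm.cycleType_conj]

/-- The passport of an isomorphism class of plane bipartite trees:
`kk d` white and `ll d` black vertices of degree `d`, for every `d ≥ 1`. -/
def HasPassportT {E : ℕ} (kk ll : ℕ → ℕ) : Quotient (treeSetoid E) → Prop :=
  Quotient.lift
    (fun T => ∀ d, 1 ≤ d → cycleCount T.1.1 d = kk d ∧ cycleCount T.1.2 d = ll d)
    (by
      intro T T' h
      have hc := cycleCount_conj (s := T.1) (t := T'.1) h
      apply propext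
      constructor <;> intro H d hd
      · rw [← hc.1 d, ← hc.2 d]; exact H d hd
      · rw [hc.1 d, hc.2 d]; exact H d hd)

/-- The passport of an isomorphism class of `2¹`-maps. -/
def HasPassportM {E : ℕ} (kk ll : ℕ → ℕ) : Quotient (mapSetoid E) → Prop :=
  Quotient.lift
    (fun T => ∀ d, 1 ≤ d → cycleCount T.1.1 d = kk d ∧ cycleCount T.1.2 d = ll d)
    (by
      intro T T' h
      have hc := cycleCount_conj (s := T.1) (t := T'.1) h
      apply propext
      constructor <;> intro H d hd
      · rw [← hc.1 d, ← hc.2 d]; exact H d hd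
      · rw [hc.1 d, hc.2 d]; exact H d hd)


/-!
Conjugating, the white rotation becomes the 4-cycle `sig = (0 1 2 3)`, which fixes `4` and `5`.
The black rotation `β` is then an involution with two transpositions such that `sig * β` is the
face 6-cycle; the centralizer of `sig`, generated by `sig` and `(4 5)`, splits these `β` into two
orbits, represented by `al1` and `al2`. The automorphism groups, which are centralizers of the
pair of rotations, are computed directly: the half turn `(sig * al1) ^ 3` preserves `al1`, while
`al2` admits only the identity.
-/

namespace Equiv.Perm

variable {α : Type*} [Fintype α] [DecidableEq α]

theorem support_eq_univ_of_cycleType_eq {f : Perm α} (h : f.cycleType = {Fintype.card α}) :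
    f.support = Finset.univ :=
  Finset.eq_univ_of_card _ (by rw [← sum_cycleType, h, Multiset.sum_singleton])

theorem isCycle_of_cycleType_eq {f : Perm α} (h : f.cycleType = {Fintype.card α}) :
    f.IsCycle :=
  card_cycleType_eq_one.mp (by rw [h, Multiset.card_singleton])

theorem apply_ne_self_of_cycleType_eq {f : Perm α} (h : f.cycleType = {Fintype.card α})
    (x : α) : f x ≠ x :=
  mem_support.mp (support_eq_univ_of_cycleType_eq h ▸ Finset.mem_univ x)

theorem pow_apply_ne_self_of_cycleType_eq {f : Perm α} (h : f.cycleType = {Fintype.card α})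
    {n : ℕ} (hn : ¬ Fintype.card α ∣ n) (x : α) : (f ^ n) x ≠ x := by
  intro hx
  have hfn : f ^ n = 1 :=
    ((isCycle_of_cycleType_eq h).pow_eq_one_iff' (apply_ne_self_of_cycleType_eq h x)).mpr hx
  apply hn
  rw [← Finset.card_univ, ← support_eq_univ_of_cycleType_eq h,
    ← (isCycle_of_cycleType_eq h).orderOf]
  exact orderOf_dvd_of_pow_eq_one hfn

theorem mul_self_eq_one_of_cycleType_eq_two_two {f : Perm α} (h : f.cycleType = {2, 2}) :
    f * f = 1 := by
  rw [← sq, ← orderOf_dvd_iff_pow_eq_one, ← lcm_cycleType, h]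
  decide

theorem exists_apply_eq_self_of_sum_cycleType_lt {f : Perm α}
    (h : f.cycleType.sum < Fintype.card α) : ∃ x, f x = x := by
  rw [sum_cycleType] at h
  obtain ⟨x, -, hx⟩ := Finset.exists_mem_notMem_of_card_lt_card h
  exact ⟨x, notMem_support.mp hx⟩

end Equiv.Perm

open Equiv.Perm

theorem cycleType_eq_of_cycleCount_eq {E : ℕ} {f g : Perm (Fin E)}
    (h : ∀ d, 2 ≤ d → cycleCount f d = cycleCount g d) : f.cycleType = g.cycleType := by
  ext d
  rcases lt_or_ge d 2 with hd | hd
  · rw [Multiset.count_eq_zero.mpr fun hm => by linarith [two_le_of_mem_cycleType hm],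
      Multiset.count_eq_zero.mpr fun hm => by linarith [two_le_of_mem_cycleType hm]]
  · simpa [cycleCount, show d ≠ 1 by omega] using h d hd

theorem numCycles_eq_one_iff {E : ℕ} (hE : 2 ≤ E) {f : Perm (Fin E)} :
    numCycles f = 1 ↔ f.cycleType = {E} := by
  refine ⟨fun h => ?_, fun h => by simp [numCycles, h]⟩
  have hsum : f.cycleType.sum ≤ E := by simpa using sum_cycleType_le f
  have hlen : 2 * Multiset.card f.cycleType ≤ f.cycleType.sum := by
    simpa [mul_comm] using Multiset.card_nsmul_le_sum (fun _ hm => two_le_of_mem_cycleType hm)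
  have hempty : Multiset.card f.cycleType = 0 → f.cycleType.sum = 0 := fun h0 => by
    rw [Multiset.card_eq_zero.mp h0, Multiset.sum_zero]
  obtain ⟨n, hn⟩ := Multiset.card_eq_one.mp (show Multiset.card f.cycleType = 1 by
    unfold numCycles at h; omega)
  rw [hn]
  simp only [numCycles, hn, Multiset.sum_singleton, Multiset.card_singleton] at h hsum
  rw [show n = E by omega]

theorem exists_mem_closure_apply_eq_of_cycleType_mul_eq {E : ℕ} {σ α : Perm (Fin E)}
    (h : (σ * α).cycleType = {E}) (i j : Fin E) :
    ∃ g ∈ Subgroup.closure ({σ, α} : Set (Perm (Fin E))), g i = j := by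
  replace h : (σ * α).cycleType = {Fintype.card (Fin E)} := by rw [Fintype.card_fin, h]
  obtain ⟨n, hn⟩ := (isCycle_of_cycleType_eq h).exists_pow_eq
    (apply_ne_self_of_cycleType_eq h i) (apply_ne_self_of_cycleType_eq h j)
  exact ⟨(σ * α) ^ n, Subgroup.pow_mem _ (Subgroup.mul_mem _
    (Subgroup.subset_closure (Set.mem_insert _ _))
    (Subgroup.subset_closure (Set.mem_insert_of_mem _ (Set.mem_singleton _)))) n, hn⟩

namespace PassportA1sqA4B1sqB2sq

def sig : Perm (Fin 6) := c[0, 1, 2, 3]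

def al1 : Perm (Fin 6) := swap 4 0 * swap 5 2

def al2 : Perm (Fin 6) := swap 4 0 * swap 5 1

theorem cycleType_sig : sig.cycleType = {4} := by decide +kernel

theorem cycleType_al1 : al1.cycleType = {2, 2} :=
  cycleType_swap_mul_swap_of_nodup (by decide)

theorem cycleType_al2 : al2.cycleType = {2, 2} :=
  cycleType_swap_mul_swap_of_nodup (by decide)

theorem cycleType_sig_mul_al1 : (sig * al1).cycleType = {6} := by decide +kernel

theorem cycleType_sig_mul_al2 : (sig * al2).cycleType = {6} := by decide +kernel

theorem cycleCount_of_cycleType_eq_four {σ : Perm (Fin 6)} (h : σ.cycleType = {4}) (d : ℕ) :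
    cycleCount σ d = if d = 1 then 2 else if d = 4 then 1 else 0 := by
  simp only [cycleCount, h, Multiset.sum_singleton, Multiset.count_singleton]

theorem cycleCount_of_cycleType_eq_two_two {α : Perm (Fin 6)} (h : α.cycleType = {2, 2})
    (d : ℕ) : cycleCount α d = if d = 1 then 2 else if d = 2 then 2 else 0 := by
  simp only [cycleCount, h, Multiset.insert_eq_cons, Multiset.sum_cons, Multiset.sum_singleton,
    Multiset.count_cons, Multiset.count_singleton]
  split_ifs <;> omega

theorem hasPassport_iff_cycleType {σ α : Perm (Fin 6)} :
    (∀ d, 1 ≤ d → cycleCount σ d = (if d = 1 then 2 else if d = 4 then 1 else 0) ∧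
      cycleCount α d = (if d = 1 then 2 else if d = 2 then 2 else 0)) ↔
    σ.cycleType = {4} ∧ α.cycleType = {2, 2} := by
  refine ⟨fun h => ⟨?_, ?_⟩, fun ⟨hσ, hα⟩ d _ =>
    ⟨cycleCount_of_cycleType_eq_four hσ d, cycleCount_of_cycleType_eq_two_two hα d⟩⟩
  · rw [← cycleType_sig]
    exact cycleType_eq_of_cycleCount_eq fun d hd => by
      rw [(h d (by omega)).1, cycleCount_of_cycleType_eq_four cycleType_sig]
  · rw [← cycleType_al1]
    exact cycleType_eq_of_cycleCount_eq fun d hd => by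
      rw [(h d (by omega)).2, cycleCount_of_cycleType_eq_two_two cycleType_al1]

theorem isPlaneBipTree_of_cycleType {σ α : Perm (Fin 6)} (hσ : σ.cycleType = {4})
    (hα : α.cycleType = {2, 2}) (hφ : (σ * α).cycleType = {6}) : IsPlaneBipTree (σ, α) :=
  ⟨exists_mem_closure_apply_eq_of_cycleType_mul_eq hφ, by simp [numCycles, hσ, hα],
    (numCycles_eq_one_iff (by norm_num)).mpr hφ⟩

def tree₁ : Quotient (treeSetoid 6) :=
  Quotient.mk _ ⟨(sig, al1), isPlaneBipTree_of_cycleType cycleType_sig cycleType_al1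
    cycleType_sig_mul_al1⟩

def tree₂ : Quotient (treeSetoid 6) :=
  Quotient.mk _ ⟨(sig, al2), isPlaneBipTree_of_cycleType cycleType_sig cycleType_al2
    cycleType_sig_mul_al2⟩

/- `sig * β` is a `6`-cycle iff no point has period `1`, `2` or `3`, and `sig ^ k * (4 5) ^ t`
runs through the centralizer of `sig`. -/
theorem exists_conj_eq_al1_or_al2 : ∀ β : Perm (Fin 6), β * β = 1 → (∃ i, β i = i) →
    (∀ i, ((sig * β) ^ 2) i ≠ i ∧ ((sig * β) ^ 3) i ≠ i) →
    ∃ k : Fin 4, ∃ t : Fin 2,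
      let g := sig ^ (k : ℕ) * swap 4 5 ^ (t : ℕ)
      g * sig * g⁻¹ = sig ∧ (g * β * g⁻¹ = al1 ∨ g * β * g⁻¹ = al2) := by
  decide +kernel

theorem conjRel_of_cycleType {σ α : Perm (Fin 6)} (hσ : σ.cycleType = {4})
    (hα : α.cycleType = {2, 2}) (hφ : (σ * α).cycleType = {6}) :
    conjRel (σ, α) (sig, al1) ∨ conjRel (σ, α) (sig, al2) := by
  obtain ⟨g, hg⟩ := isConj_iff.mp (isConj_of_cycleType_eq (hσ.trans cycleType_sig.symm))
  set β := g * α * g⁻¹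
  have hβ : β.cycleType = {2, 2} := by rw [cycleType_conj, hα]
  have hsigβ : (sig * β).cycleType = {Fintype.card (Fin 6)} := by
    rw [← hg, show g * σ * g⁻¹ * β = g * (σ * α) * g⁻¹ by simp only [β]; group,
      cycleType_conj, hφ]
    rfl
  have hσβ : conjRel (σ, α) (sig, β) := ⟨g, hg, rfl⟩
  obtain ⟨k, t, hk, hkβ⟩ := exists_conj_eq_al1_or_al2 β
    (mul_self_eq_one_of_cycleType_eq_two_two hβ)
    (exists_apply_eq_self_of_sum_cycleType_lt (by rw [hβ]; decide))
    fun i => ⟨pow_apply_ne_self_of_cycleType_eq hsigβ (by decide) i,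
      pow_apply_ne_self_of_cycleType_eq hsigβ (by decide) i⟩
  exact hkβ.imp (fun h => conjRel_equiv.trans hσβ ⟨_, hk, h⟩)
    (fun h => conjRel_equiv.trans hσβ ⟨_, hk, h⟩)

theorem hasPassportT_iff (T : Quotient (treeSetoid 6)) :
    HasPassportT (fun d => if d = 1 then 2 else if d = 4 then 1 else 0)
      (fun d => if d = 1 then 2 else if d = 2 then 2 else 0) T ↔ T = tree₁ ∨ T = tree₂ := by
  constructor
  · induction T using Quotient.inductionOn with
    | h T =>
      obtain ⟨⟨σ, α⟩, hT⟩ := T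
      intro hp
      obtain ⟨hσ, hα⟩ := hasPassport_iff_cycleType.mp hp
      exact (conjRel_of_cycleType hσ hα ((numCycles_eq_one_iff (by norm_num)).mp hT.2.2)).imp
        Quotient.sound Quotient.sound
  · rintro (rfl | rfl)
    · exact hasPassport_iff_cycleType.mpr ⟨cycleType_sig, cycleType_al1⟩
    · exact hasPassport_iff_cycleType.mpr ⟨cycleType_sig, cycleType_al2⟩

theorem autCard_sig_al1 : autCard (sig, al1) = 2 := by
  rw [autCard, Fintype.card_of_subtype {1, (sig * al1) ^ 3} (by decide +kernel)]
  decide +kernel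

theorem autCard_sig_al2 : autCard (sig, al2) = 1 := by
  rw [autCard, Fintype.card_of_subtype {1} (by decide +kernel)]
  rfl

end PassportA1sqA4B1sqB2sq

open PassportA1sqA4B1sqB2sq

/-- for the passport `a₁²a₄b₁²b₂²` (trees with `6` edges, white
vertices of degrees `1,1,4`, black vertices of degrees `1,1,2,2`) there are
exactly two plane bipartite trees, one with automorphism group of order `2`
and one with trivial automorphism group, and `1 + 1/2 = 2!·3!/(2!·2!·2!)`. -/
theorem stmt3
    (kk ll : ℕ → ℕ)
    (hkk : kk = fun d => if d = 1 then 2 else if d = 4 then 1 else 0)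
    (hll : ll = fun d => if d = 1 then 2 else if d = 2 then 2 else 0) :
    (∃ T₁ T₂ : Quotient (treeSetoid 6), T₁ ≠ T₂ ∧
      Finset.univ.filter (fun T : Quotient (treeSetoid 6) => HasPassportT kk ll T)
        = {T₁, T₂} ∧
      autCardT T₁ = 2 ∧ autCardT T₂ = 1) ∧
    (1 + 1 / 2 : ℚ) =
      (Nat.factorial 2 * Nat.factorial 3 : ℚ) /
        (Nat.factorial 2 * Nat.factorial 2 * Nat.factorial 2) := by
  subst hkk hll
  refine ⟨⟨tree₁, tree₂, fun h => ?_, ?_, autCard_sig_al1, autCard_sig_al2⟩,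
    by norm_num [Nat.factorial]⟩
  · have h21 : (2 : ℕ) = 1 :=
      autCard_sig_al1.symm.trans ((congrArg autCardT h).trans autCard_sig_al2)
    omega
  · ext T
    simp only [Finset.mem_filter, Finset.mem_univ, true_and, Finset.mem_insert,
      Finset.mem_singleton, hasPassportT_iff]

end
end

section
/- Let β be a rational function of the form β(z) = ∏_{i=0}^n (z - x_i)^{k_i} / (z - c) with ∑ k_i = p+1, and suppose β - r = ∏_{j=0}^m (z - y_j)^{l_j} / (z - c) with ∑ l_j = p+1. Then the numerator of the derivative β' equals p · ∏_{i=0}^n (z - x_i)^{k_i - 1} · ∏_{j=0}^m (z - y_j)^{l_j - 1}, provided n + m = p - 1. -/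
/-!
Write `N = P' (X - c) - P` for the numerator of `β'`. Since `β` and `β - r` have the same
derivative, `N` is also `Q' (X - c) - Q` for `Q = P - r (X - c) = ∏ (X - yⱼ)^{lⱼ}`. Hence every
`(X - xᵢ)^{kᵢ - 1}` and every `(X - yⱼ)^{lⱼ - 1}` divides `N`, and these are pairwise coprime.
When `n + m = p - 1` their product has degree `2 (p + 1) - (n + 1) - (m + 1) = p + 1`, while `N`
has degree at most `p + 1` with coefficient `p` in degree `p + 1`; so `N` is `p` times the product.
-/

open Polynomial

namespace Polynomial

section CommRing

variable {R : Type*} [CommRing R]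

/-- The numerator of the derivative of `P / (X - c)`. -/
noncomputable def derivNumerator (c : R) (P : R[X]) : R[X] :=
  derivative P * (X - C c) - P

theorem derivNumerator_sub_C_mul_X_sub_C (c r : R) (P : R[X]) :
    derivNumerator c (P - C r * (X - C c)) = derivNumerator c P := by
  simp only [derivNumerator, derivative_sub, derivative_mul, derivative_C, derivative_X]
  ring

theorem pow_sub_one_dvd_derivNumerator {c : R} {P q : R[X]} {k : ℕ} (h : q ^ k ∣ P) :
    q ^ (k - 1) ∣ derivNumerator c P :=
  dvd_sub ((pow_sub_one_dvd_derivative_of_pow_dvd h).mul_right _)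
    ((pow_dvd_pow q (Nat.sub_le k 1)).trans h)

theorem natDegree_derivNumerator_le (c : R) (P : R[X]) :
    (derivNumerator c P).natDegree ≤ P.natDegree := by
  refine (natDegree_sub_le _ _).trans (max_le ?_ le_rfl)
  rcases eq_or_ne (derivative P) 0 with h | h
  · simp [h]
  have hP : 0 < P.natDegree := Nat.pos_of_ne_zero fun h0 => h (derivative_of_natDegree_zero h0)
  calc (derivative P * (X - C c)).natDegree
      ≤ (derivative P).natDegree + (X - C c).natDegree := natDegree_mul_le
    _ ≤ (P.natDegree - 1) + 1 :=
        add_le_add (natDegree_derivative_le P) (natDegree_X_sub_C_le c)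
    _ = P.natDegree := Nat.sub_add_cancel hP

theorem coeff_derivNumerator_of_monic {c : R} {P : R[X]} {d : ℕ} (hP : P.Monic)
    (hd : P.natDegree = d + 1) : (derivNumerator c P).coeff (d + 1) = d := by
  have hlead : P.coeff (d + 1) = 1 := hd ▸ hP.coeff_natDegree
  have htop : (derivative P).coeff (d + 1) = 0 :=
    coeff_eq_zero_of_natDegree_lt ((natDegree_derivative_le P).trans_lt (by omega))
  rw [derivNumerator, coeff_sub, mul_sub, mul_comm _ (C c), coeff_sub, coeff_mul_X, coeff_C_mul,
    coeff_derivative, hlead, htop]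
  ring

theorem eq_C_coeff_mul_of_monic_of_dvd {F D : R[X]} (hD : D.Monic) (hdvd : D ∣ F)
    (hdeg : F.natDegree ≤ D.natDegree) : F = C (F.coeff D.natDegree) * D := by
  have hF := eq_leadingCoeff_mul_of_monic_of_dvd_of_natDegree_le hD hdvd hdeg
  have hcoeff : F.coeff D.natDegree = F.leadingCoeff := by
    conv_lhs => rw [hF]
    rw [coeff_C_mul, hD.coeff_natDegree, mul_one]
  rwa [hcoeff]

end CommRing

section Field

variable {K : Type*} [Field K] {ι : Type*} [Fintype ι] {a : ι → K} (e : ι → ℕ)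

theorem prod_X_sub_C_pow_dvd (ha : Function.Injective a) {F : K[X]}
    (h : ∀ i, (X - C (a i)) ^ e i ∣ F) : ∏ i, (X - C (a i)) ^ e i ∣ F :=
  Fintype.prod_dvd_of_coprime (fun _ _ hij => (pairwise_coprime_X_sub_C ha hij).pow) h

theorem monic_prod_X_sub_C_pow : (∏ i, (X - C (a i)) ^ e i).Monic :=
  monic_prod_of_monic _ _ fun i _ => (monic_X_sub_C (a i)).pow (e i)

theorem natDegree_prod_X_sub_C_pow : (∏ i, (X - C (a i)) ^ e i).natDegree = ∑ i, e i := by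
  rw [natDegree_prod_of_monic _ _ fun i _ => (monic_X_sub_C (a i)).pow (e i)]
  simp only [natDegree_pow, natDegree_X_sub_C, mul_one]

end Field

end Polynomial

theorem Finset.sum_sub_one_add_card {ι : Type*} (s : Finset ι) {k : ι → ℕ}
    (hk : ∀ i ∈ s, 0 < k i) : ∑ i ∈ s, (k i - 1) + s.card = ∑ i ∈ s, k i := by
  rw [card_eq_sum_ones, ← sum_add_distrib]
  exact sum_congr rfl fun i hi => Nat.sub_add_cancel (hk i hi)

/-- Let `β(z) = ∏ (z - xᵢ)^{kᵢ}/(z - c)` with `∑ kᵢ = p + 1`, and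
suppose `β - r = ∏ (z - yⱼ)^{lⱼ}/(z - c)` with `∑ lⱼ = p + 1`.  Then the
numerator of `β'`, namely `P'(z)(z - c) - P(z)` where `P = ∏ (z - xᵢ)^{kᵢ}`,
equals `p · ∏ (z - xᵢ)^{kᵢ - 1} · ∏ (z - yⱼ)^{lⱼ - 1}`, provided
`n + m = p - 1`. -/
theorem stmt8 {K : Type*} [Field K]
    (p n m : ℕ) (hp : p.Prime) (hnm : n + m = p - 1)
    (x : Fin (n + 1) → K) (k : Fin (n + 1) → ℕ)
    (y : Fin (m + 1) → K) (l : Fin (m + 1) → ℕ)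
    (c r : K)
    (hx_inj : Function.Injective x) (hy_inj : Function.Injective y)
    (hxy : ∀ i j, x i ≠ y j)
    (hk_pos : ∀ i, 0 < k i) (hl_pos : ∀ j, 0 < l j)
    (hk_sum : ∑ i, k i = p + 1) (hl_sum : ∑ j, l j = p + 1)
    (hbeta : (∏ i, (X - C (x i)) ^ k i) - C r * (X - C c)
        = ∏ j, (X - C (y j)) ^ l j) :
    derivative (∏ i, (X - C (x i)) ^ k i) * (X - C c)
        - ∏ i, (X - C (x i)) ^ k i
      = C ((p : K)) * (∏ i, (X - C (x i)) ^ (k i - 1))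
          * ∏ j, (X - C (y j)) ^ (l j - 1) := by
  set P := ∏ i, (X - C (x i)) ^ k i
  set e := Sum.elim (fun i => k i - 1) (fun j => l j - 1)
  have hprod : ∏ s, (X - C (Sum.elim x y s)) ^ e s
      = (∏ i, (X - C (x i)) ^ (k i - 1)) * ∏ j, (X - C (y j)) ^ (l j - 1) :=
    Fintype.prod_sum_type _
  have hPdeg : P.natDegree = p + 1 := (natDegree_prod_X_sub_C_pow k).trans hk_sum
  have hdeg : ∑ s, e s = p + 1 := by
    have hk := Finset.univ.sum_sub_one_add_card fun i _ => hk_pos i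
    have hl := Finset.univ.sum_sub_one_add_card fun j _ => hl_pos j
    simp only [Finset.card_univ, Fintype.card_fin] at hk hl
    simp only [e, Fintype.sum_sum_type, Sum.elim_inl, Sum.elim_inr]
    have hp1 := hp.one_lt
    omega
  have hdvd : ∏ s, (X - C (Sum.elim x y s)) ^ e s ∣ derivNumerator c P := by
    refine prod_X_sub_C_pow_dvd e (hx_inj.sumElim hy_inj hxy) ?_
    rintro (i | j)
    · exact pow_sub_one_dvd_derivNumerator (Finset.dvd_prod_of_mem _ (Finset.mem_univ i))
    · rw [← derivNumerator_sub_C_mul_X_sub_C c r, hbeta]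
      exact pow_sub_one_dvd_derivNumerator (Finset.dvd_prod_of_mem _ (Finset.mem_univ j))
  -- `p` may vanish in `K`, so this coefficient need not be the leading one.
  have hN := eq_C_coeff_mul_of_monic_of_dvd (monic_prod_X_sub_C_pow e) hdvd
    (by rw [natDegree_prod_X_sub_C_pow, hdeg, ← hPdeg]; exact natDegree_derivNumerator_le c P)
  rw [natDegree_prod_X_sub_C_pow, hdeg,
    coeff_derivNumerator_of_monic (monic_prod_X_sub_C_pow k) hPdeg, hprod, ← mul_assoc] at hN
  exact hN
end
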